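/- arXiv:1105.4563 — 3 statements merged into one kernel-verified Lean document; each statement's English description precedes it below -/
import Mathlib

section
/- Let X_1,...,X_T be real random variables, γ̂_k = T^{-1} Σ_{t=|k|+1}^{T} X_{t-|k|} X_t for |k| < T, Σ̂_T = (γ̂_{s-t})_{1≤s,t≤T} the sample covariance matrix, and I_T(θ) = T^{-1} |Σ_{t=1}^T X_t e^{itθ}|² the periodogram. Then the operator norm (spectral radius) of Σ̂_T satisfies λ(Σ̂_T) ≤ max_{-π≤θ≤π} I_T(θ) (pointwise, for every realization). -/
/-!
Writing `x̂ θ = ∑ₜ xₜ e^{itθ}`, the sample autocovariances are the Fourier cosine coefficients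
of the periodogram, `γ̂ₖ = (2π)⁻¹ ∫_{-π}^{π} I(θ) cos (kθ) dθ`, so `Σ̂` is the Toeplitz matrix
of the symbol `I` and `yᵀ Σ̂ x = (2π)⁻¹ ∫ I(θ) Re (conj (ŷ θ) x̂ θ) dθ`. Bounding `I` by its
maximum `M` and `Re (conj ŷ x̂)` by `(|ŷ|² + |x̂|²) / 2`, Parseval gives
`yᵀ Σ̂ x ≤ M (|x|² + |y|²) / 2`; the choice `y = Σ̂ x / |Σ̂ x|` then yields `|Σ̂ x| ≤ M` for
every unit vector `x`.
-/

open MeasureTheory Real Finset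

noncomputable section

/-- Operator norm (spectral radius) `λ(A) = max_{|x|=1} |A x|` of a real matrix. -/
def opNorm {T : ℕ} (A : Matrix (Fin T) (Fin T) ℝ) : ℝ :=
  sSup {r : ℝ | ∃ x : Fin T → ℝ, ∑ i, x i ^ 2 = 1 ∧
    r = Real.sqrt (∑ i, (A.mulVec x i) ^ 2)}

open Matrix

theorem integral_cos_int_mul (k : ℤ) :
    ∫ θ in (-π)..π, cos (k * θ) = if k = 0 then 2 * π else 0 := by
  rcases eq_or_ne k 0 with rfl | hk
  · simp [two_mul]
  · rw [intervalIntegral.integral_comp_mul_left cos (Int.cast_ne_zero.mpr hk), integral_cos,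
      mul_neg, sin_neg, sin_int_mul_pi, if_neg hk]
    simp

theorem integral_cos_int_mul_mul_cos (k m : ℤ) :
    ∫ θ in (-π)..π, cos (k * θ) * cos (m * θ) =
      π * ((if m = k then 1 else 0) + if m = -k then 1 else 0) := by
  have product_to_sum : ∀ θ : ℝ, cos (k * θ) * cos (m * θ) =
      (cos ((k - m : ℤ) * θ) + cos ((k + m : ℤ) * θ)) / 2 := fun θ => by
    push_cast
    rw [sub_mul, add_mul, cos_sub, cos_add]
    ring
  simp_rw [product_to_sum]
  rw [intervalIntegral.integral_div, intervalIntegral.integral_add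
      ((by fun_prop : Continuous _).intervalIntegrable _ _)
      ((by fun_prop : Continuous _).intervalIntegrable _ _),
    integral_cos_int_mul, integral_cos_int_mul]
  simp only [sub_eq_zero, add_eq_zero_iff_eq_neg', eq_comm (a := k) (b := m)]
  split_ifs <;> ring

section CosForm

variable {ι : Type*} (s : Finset ι) (w : ι → ℤ)

/-- `cosForm s w a b θ = Re (conj (â θ) * b̂ θ)`, where `â θ = ∑ i ∈ s, a i * exp (i * w i * θ)`. -/
def cosForm (a b : ι → ℝ) (θ : ℝ) : ℝ :=
  ∑ i ∈ s, ∑ j ∈ s, a i * b j * cos ((w i - w j : ℤ) * θ)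

def lagSum (a b : ι → ℝ) (k : ℤ) : ℝ :=
  ∑ i ∈ s, ∑ j ∈ s, if w i - w j = k then a i * b j else 0

theorem cosForm_eq_cos_mul_cos_add_sin_mul_sin (a b : ι → ℝ) (θ : ℝ) :
    cosForm s w a b θ =
      (∑ i ∈ s, a i * cos (w i * θ)) * (∑ i ∈ s, b i * cos (w i * θ)) +
        (∑ i ∈ s, a i * sin (w i * θ)) * (∑ i ∈ s, b i * sin (w i * θ)) := by
  simp only [cosForm, sum_mul_sum, ← sum_add_distrib]
  refine sum_congr rfl fun i _ => sum_congr rfl fun j _ => ?_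
  push_cast
  rw [sub_mul, cos_sub]
  ring

theorem cosForm_self_nonneg (a : ι → ℝ) (θ : ℝ) : 0 ≤ cosForm s w a a θ := by
  rw [cosForm_eq_cos_mul_cos_add_sin_mul_sin]
  exact add_nonneg (mul_self_nonneg _) (mul_self_nonneg _)

theorem cosForm_le_half_add (a b : ι → ℝ) (θ : ℝ) :
    cosForm s w a b θ ≤ (cosForm s w a a θ + cosForm s w b b θ) / 2 := by
  simp only [cosForm_eq_cos_mul_cos_add_sin_mul_sin]
  nlinarith [two_mul_le_add_sq (∑ i ∈ s, a i * cos (w i * θ)) (∑ i ∈ s, b i * cos (w i * θ)),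
    two_mul_le_add_sq (∑ i ∈ s, a i * sin (w i * θ)) (∑ i ∈ s, b i * sin (w i * θ))]

theorem norm_sum_mul_exp_sq (a : ι → ℝ) (θ : ℝ) :
    ‖∑ i ∈ s, (a i : ℂ) * Complex.exp (Complex.I * (w i : ℂ) * θ)‖ ^ 2 = cosForm s w a a θ := by
  have : ∑ i ∈ s, (a i : ℂ) * Complex.exp (Complex.I * (w i : ℂ) * θ) =
      ((∑ i ∈ s, a i * cos (w i * θ) : ℝ) : ℂ) +
        ((∑ i ∈ s, a i * sin (w i * θ) : ℝ) : ℂ) * Complex.I := by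
    push_cast
    rw [sum_mul, ← sum_add_distrib]
    refine sum_congr rfl fun i _ => ?_
    rw [show Complex.I * (w i : ℂ) * θ = ((w i * θ : ℝ) : ℂ) * Complex.I by push_cast; ring,
      Complex.exp_mul_I]
    push_cast
    ring
  rw [this, Complex.sq_norm, Complex.normSq_add_mul_I,
    cosForm_eq_cos_mul_cos_add_sin_mul_sin, sq, sq]

@[fun_prop]
theorem continuous_cosForm (a b : ι → ℝ) : Continuous (cosForm s w a b) := by
  unfold cosForm
  fun_prop

theorem integral_mul_cosForm {f : ℝ → ℝ} (hf : Continuous f) (a b : ι → ℝ) :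
    ∫ θ in (-π)..π, f θ * cosForm s w a b θ =
      ∑ i ∈ s, ∑ j ∈ s, a i * b j * ∫ θ in (-π)..π, f θ * cos ((w i - w j : ℤ) * θ) := by
  simp only [cosForm, mul_sum]
  rw [intervalIntegral.integral_finsetSum fun i _ =>
    (by fun_prop : Continuous _).intervalIntegrable _ _]
  refine sum_congr rfl fun i _ => ?_
  rw [intervalIntegral.integral_finsetSum fun j _ =>
    (by fun_prop : Continuous _).intervalIntegrable _ _]
  refine sum_congr rfl fun j _ => ?_
  rw [← intervalIntegral.integral_const_mul]
  congr 1 with θ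
  ring

theorem lagSum_swap (a b : ι → ℝ) (k : ℤ) : lagSum s w a b (-k) = lagSum s w b a k := by
  rw [lagSum, sum_comm]
  refine sum_congr rfl fun i _ => sum_congr rfl fun j _ => ?_
  exact if_congr (by omega) (mul_comm _ _) rfl

theorem lagSum_zero {s : Finset ι} {w : ι → ℤ} (hw : Set.InjOn w s) (a b : ι → ℝ) :
    lagSum s w a b 0 = ∑ i ∈ s, a i * b i := by
  refine sum_congr rfl fun i hi => ?_
  rw [sum_eq_single_of_mem i hi fun j hj hji => if_neg fun h => hji (hw hj hi (by omega)),
    if_pos (sub_self _)]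

theorem integral_cos_mul_cosForm_self (a : ι → ℝ) (k : ℤ) :
    (2 * π)⁻¹ * ∫ θ in (-π)..π, cos (k * θ) * cosForm s w a a θ = lagSum s w a a k := by
  have expand : ∫ θ in (-π)..π, cos (k * θ) * cosForm s w a a θ =
      π * (lagSum s w a a k + lagSum s w a a (-k)) := by
    simp only [integral_mul_cosForm s w (by fun_prop : Continuous fun θ => cos (k * θ)),
      integral_cos_int_mul_mul_cos, lagSum, ← sum_add_distrib, mul_sum]
    refine sum_congr rfl fun i _ => sum_congr rfl fun j _ => ?_
    split_ifs <;> ring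
  rw [expand, lagSum_swap]
  field_simp
  ring

theorem integral_cosForm_self {s : Finset ι} {w : ι → ℤ} (hw : Set.InjOn w s) (a : ι → ℝ) :
    ∫ θ in (-π)..π, cosForm s w a a θ = 2 * π * ∑ i ∈ s, a i ^ 2 := by
  have := integral_cos_mul_cosForm_self s w a 0
  simp only [Int.cast_zero, zero_mul, cos_zero, one_mul, lagSum_zero hw] at this
  simp only [sq, ← this]
  field_simp

theorem toeplitz_form_le {s : Finset ι} {w : ι → ℤ} (hw : Set.InjOn w s) {f : ℝ → ℝ}
    (hf : Continuous f) {M : ℝ} (hf_nonneg : ∀ θ ∈ Set.Icc (-π) π, 0 ≤ f θ)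
    (hf_le : ∀ θ ∈ Set.Icc (-π) π, f θ ≤ M) (a b : ι → ℝ) :
    ∑ i ∈ s, ∑ j ∈ s, a i * b j * ((2 * π)⁻¹ * ∫ θ in (-π)..π, f θ * cos ((w i - w j : ℤ) * θ))
      ≤ M * (∑ i ∈ s, a i ^ 2 + ∑ i ∈ s, b i ^ 2) / 2 := by
  have pointwise : ∀ θ ∈ Set.Icc (-π) π, f θ * cosForm s w a b θ ≤
      M * ((cosForm s w a a θ + cosForm s w b b θ) / 2) := fun θ hθ =>
    calc f θ * cosForm s w a b θ ≤ f θ * ((cosForm s w a a θ + cosForm s w b b θ) / 2) :=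
          mul_le_mul_of_nonneg_left (cosForm_le_half_add s w a b θ) (hf_nonneg θ hθ)
      _ ≤ M * ((cosForm s w a a θ + cosForm s w b b θ) / 2) :=
          mul_le_mul_of_nonneg_right (hf_le θ hθ)
            (by linarith [cosForm_self_nonneg s w a θ, cosForm_self_nonneg s w b θ])
  have integrated := intervalIntegral.integral_mono_on (by linarith [pi_pos])
    ((by fun_prop : Continuous fun θ => f θ * cosForm s w a b θ).intervalIntegrable
      (μ := volume) _ _)
    ((by fun_prop : Continuous fun θ => M * ((cosForm s w a a θ + cosForm s w b b θ) / 2)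
      ).intervalIntegrable (μ := volume) _ _) pointwise
  rw [integral_mul_cosForm s w hf, intervalIntegral.integral_const_mul,
    intervalIntegral.integral_div, intervalIntegral.integral_add
      ((continuous_cosForm s w a a).intervalIntegrable _ _)
      ((continuous_cosForm s w b b).intervalIntegrable _ _),
    integral_cosForm_self hw, integral_cosForm_self hw] at integrated
  calc _ = (2 * π)⁻¹ * ∑ i ∈ s, ∑ j ∈ s,
        a i * b j * ∫ θ in (-π)..π, f θ * cos ((w i - w j : ℤ) * θ) := by
        simp only [mul_sum]
        exact sum_congr rfl fun i _ => sum_congr rfl fun j _ => by ring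
    _ ≤ (2 * π)⁻¹ * (M * ((2 * π * ∑ i ∈ s, a i ^ 2 + 2 * π * ∑ i ∈ s, b i ^ 2) / 2)) :=
        mul_le_mul_of_nonneg_left integrated (by positivity)
    _ = _ := by field_simp

end CosForm

theorem lagSum_Icc_natCast (T m : ℕ) (X : ℕ → ℝ) :
    lagSum (Icc 1 T) (fun t : ℕ => (t : ℤ)) X X m = ∑ t ∈ Icc (m + 1) T, X (t - m) * X t := by
  rw [lagSum, ← sum_product', ← sum_filter]
  symm
  refine sum_nbij' (fun t => (t, t - m)) Prod.fst ?_ ?_ ?_ ?_ ?_ <;> simp [mul_comm] <;> intros <;>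
    omega

theorem lagSum_Icc (T : ℕ) (X : ℕ → ℝ) (k : ℤ) :
    lagSum (Icc 1 T) (fun t : ℕ => (t : ℤ)) X X k =
      ∑ t ∈ Icc (k.natAbs + 1) T, X (t - k.natAbs) * X t := by
  obtain ⟨m, rfl | rfl⟩ := Int.eq_nat_or_neg k
  · exact lagSum_Icc_natCast T m X
  · rw [lagSum_swap, Int.natAbs_neg, Int.natAbs_natCast, lagSum_Icc_natCast]

theorem opNorm_le_of_dotProduct_mulVec_le {T : ℕ} (A : Matrix (Fin T) (Fin T) ℝ) {M : ℝ}
    (hM : 0 ≤ M) (h : ∀ x y : Fin T → ℝ, y ⬝ᵥ A *ᵥ x ≤ M * (∑ i, y i ^ 2 + ∑ i, x i ^ 2) / 2) :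
    opNorm A ≤ M := by
  refine Real.sSup_le ?_ hM
  rintro r ⟨x, hx, rfl⟩
  obtain hq | hq := (sqrt_nonneg (∑ i, (A *ᵥ x) i ^ 2)).eq_or_lt
  · rwa [← hq]
  set q := √(∑ i, (A *ᵥ x) i ^ 2)
  have hAx : ∑ i, (A *ᵥ x) i ^ 2 = q ^ 2 := (sq_sqrt (by positivity)).symm
  set y := q⁻¹ • (A *ᵥ x)
  have hy_unit : ∑ i, y i ^ 2 = 1 := by
    simp only [y, Pi.smul_apply, smul_eq_mul, mul_pow, ← mul_sum, hAx]
    field_simp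
  have hy_eval : y ⬝ᵥ A *ᵥ x = q := by
    simp only [y, dotProduct, Pi.smul_apply, smul_eq_mul, mul_assoc, ← mul_sum, ← sq, hAx]
    field_simp
  have := h x y
  rw [hy_unit, hx, hy_eval] at this
  linarith

theorem statement_2_general
    (T : ℕ) (X : ℕ → ℝ)
    (hacov : ℤ → ℝ)
    (hhacov : ∀ k : ℤ, hacov k =
      (T : ℝ)⁻¹ * ∑ t ∈ Finset.Icc (k.natAbs + 1) T, X (t - k.natAbs) * X t)
    (Shat : Matrix (Fin T) (Fin T) ℝ)
    (hShat : ∀ s t : Fin T, Shat s t = hacov ((s : ℤ) - (t : ℤ)))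
    (I : ℝ → ℝ)
    (hI : ∀ θ : ℝ, I θ = (T : ℝ)⁻¹ *
      ‖∑ t ∈ Finset.Icc 1 T,
        (X t : ℂ) * Complex.exp (Complex.I * (t : ℂ) * (θ : ℂ))‖ ^ 2) :
    opNorm Shat ≤ sSup (I '' Set.Icc (-π) π) := by
  have hI_cosForm : ∀ θ, I θ = (T : ℝ)⁻¹ * cosForm (Icc 1 T) (fun t : ℕ => (t : ℤ)) X X θ := by
    intro θ
    rw [hI, ← norm_sum_mul_exp_sq]
    push_cast
    rfl
  have hI_cont : Continuous I := by
    rw [funext hI_cosForm]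
    fun_prop
  have hI_nonneg : ∀ θ, 0 ≤ I θ := fun θ => by rw [hI]; positivity
  have hI_le : ∀ θ ∈ Set.Icc (-π) π, I θ ≤ sSup (I '' Set.Icc (-π) π) := fun θ hθ =>
    le_csSup (isCompact_Icc.bddAbove_image hI_cont.continuousOn) ⟨θ, hθ, rfl⟩
  have hacov_eq : ∀ k : ℤ, hacov k = (2 * π)⁻¹ * ∫ θ in (-π)..π, I θ * cos (k * θ) := by
    intro k
    simp_rw [hhacov, ← lagSum_Icc, ← integral_cos_mul_cosForm_self, hI_cosForm,
      mul_comm _ (cos _), mul_left_comm _ (T : ℝ)⁻¹, intervalIntegral.integral_const_mul]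
    ring
  refine opNorm_le_of_dotProduct_mulVec_le Shat
    ((hI_nonneg π).trans (hI_le π ⟨by linarith [pi_pos], le_rfl⟩)) fun x y => ?_
  convert toeplitz_form_le (s := univ) (w := fun t : Fin T => (t : ℤ))
    (fun s _ t _ h => Fin.ext (by simpa using h)) hI_cont (fun θ _ => hI_nonneg θ) hI_le y x
    using 1
  simp only [dotProduct, mulVec, hShat, hacov_eq, mul_sum]
  exact sum_congr rfl fun s _ => sum_congr rfl fun t _ => by ring

/-- **The operator norm of the sample covariance matrix is bounded by the maximum
of the periodogram.**  For data `X_1, …, X_T`, with sample autocovariances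
`γ̂_k = T⁻¹ Σ_{t=|k|+1}^T X_{t-|k|} X_t`, the sample covariance matrix
`Σ̂_T = (γ̂_{s-t})` and the periodogram `I_T(θ) = T⁻¹ |Σ_{t=1}^T X_t e^{itθ}|²`, we have
`λ(Σ̂_T) ≤ max_{-π ≤ θ ≤ π} I_T(θ)` pointwise (for every realization). -/
theorem statement_2
    (T : ℕ) (hT : 0 < T) (X : ℕ → ℝ)
    (hacov : ℤ → ℝ)
    (hhacov : ∀ k : ℤ, hacov k =
      (T : ℝ)⁻¹ * ∑ t ∈ Finset.Icc (k.natAbs + 1) T, X (t - k.natAbs) * X t)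
    (Shat : Matrix (Fin T) (Fin T) ℝ)
    (hShat : ∀ s t : Fin T, Shat s t = hacov ((s : ℤ) - (t : ℤ)))
    (I : ℝ → ℝ)
    (hI : ∀ θ : ℝ, I θ = (T : ℝ)⁻¹ *
      ‖∑ t ∈ Finset.Icc 1 T,
        (X t : ℂ) * Complex.exp (Complex.I * (t : ℂ) * (θ : ℂ))‖ ^ 2) :
    opNorm Shat ≤ sSup (I '' Set.Icc (-π) π) :=
  statement_2_general T X hacov hhacov Shat hShat I hI
end
end

section
/- Let S(x) = (1/2)a_0 + Σ_{k=1}^{n} [a_k cos(kx) + b_k sin(kx)] be a real trigonometric polynomial of order n. For any x* ∈ ℝ, δ > 0 and integer l ≥ 2(1+δ)n, let x_j = x* + 2πj/l for 0 ≤ j ≤ l. Then max_{x∈ℝ} |S(x)| ≤ (1 + δ^{-1}) max_{0≤j≤l} |S(x_j)|. -/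
/-!
Write `S` in exponential form and let `F_N(t) = |∑_{j<N} e^{ijt}|² = ∑_{|k|<N} (N - |k|) e^{ikt}`.
The `l`-point rule on the grid `x_j = x* + 2πj/l` is exact for every exponential of
frequency below `l`; with `m = l - n` this makes the discrete convolution of `S` with the
de la Vallée Poussin kernel `F_m - F_n` equal to `l (m - n) S`. Since `|F_m - F_n| ≤ F_m + F_n`
and the grid sums of these are `(m + n) l = l²`, we get `(l - 2n) |S x| ≤ l max_j |S x_j|`,
and `l / (l - 2n) ≤ 1 + δ⁻¹` because `l ≥ 2(1 + δ) n`.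
-/

open Real Finset Complex ComplexConjugate

noncomputable section

def cisMul (k : ℤ) (t : ℝ) : ℂ := cexp (k * t * I)

@[simp] lemma cisMul_zero_left (t : ℝ) : cisMul 0 t = 1 := by simp [cisMul]

lemma cisMul_mul_cisMul (k k' : ℤ) (t : ℝ) : cisMul k t * cisMul k' t = cisMul (k + k') t := by
  simp only [cisMul, ← Complex.exp_add]; push_cast; ring_nf

lemma cisMul_sub_right (k : ℤ) (x y : ℝ) : cisMul k (x - y) = cisMul k x * cisMul (-k) y := by
  simp only [cisMul, ← Complex.exp_add]; push_cast; ring_nf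

lemma conj_cisMul (k : ℤ) (t : ℝ) : conj (cisMul k t) = cisMul (-k) t := by
  rw [cisMul, cisMul, ← Complex.exp_conj]
  simp

def grid (x₀ : ℝ) (l j : ℕ) : ℝ := x₀ + 2 * π * j / l

lemma sum_cisMul_grid_eq_zero {l : ℕ} {k : ℤ} (hk : ¬ (l : ℤ) ∣ k) (x₀ : ℝ) :
    ∑ j ∈ range l, cisMul k (grid x₀ l j) = 0 := by
  rcases eq_or_ne l 0 with rfl | hl
  · simp
  set ζ := cexp (2 * π * I / l)
  have hζ : IsPrimitiveRoot ζ l := Complex.isPrimitiveRoot_exp l hl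
  have hterm : ∀ j : ℕ, cisMul k (grid x₀ l j) = cisMul k x₀ * (ζ ^ k) ^ j := by
    intro j
    rw [cisMul, cisMul, ← Complex.exp_int_mul, ← Complex.exp_nat_mul, ← Complex.exp_add, grid]
    push_cast
    ring_nf
  have hζk : ζ ^ k ≠ 1 := fun h => hk ((hζ.zpow_eq_one_iff_dvd k).mp h)
  have hζkl : (ζ ^ k) ^ l = 1 := by
    rw [← zpow_natCast, ← zpow_mul, mul_comm, zpow_mul, zpow_natCast, hζ.pow_eq_one, one_zpow]
  simp_rw [hterm, ← mul_sum, geom_sum_eq hζk, hζkl, sub_self, zero_div, mul_zero]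

lemma sum_cisMul_grid {l : ℕ} {k : ℤ} (hk : |k| < l) (x₀ : ℝ) :
    ∑ j ∈ range l, cisMul k (grid x₀ l j) = if k = 0 then (l : ℂ) else 0 := by
  split_ifs with h
  · simp [h]
  · exact sum_cisMul_grid_eq_zero (fun hdvd => h (Int.eq_zero_of_abs_lt_dvd hdvd hk)) x₀

def trigPoly (s : Finset ℤ) (c : ℤ → ℂ) (t : ℝ) : ℂ := ∑ k ∈ s, c k * cisMul k t

lemma sum_grid_trigPoly_mul_trigPoly {s t : Finset ℤ} (hst : s ⊆ t) {l : ℕ}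
    (hl : ∀ k ∈ s, ∀ k' ∈ t, |k - k'| < l) (c d : ℤ → ℂ) (x₀ x : ℝ) :
    ∑ j ∈ range l, trigPoly s c (grid x₀ l j) * trigPoly t d (x - grid x₀ l j) =
      l * trigPoly s (c * d) x := by
  calc ∑ j ∈ range l, trigPoly s c (grid x₀ l j) * trigPoly t d (x - grid x₀ l j)
      = ∑ k ∈ s, ∑ k' ∈ t,
          c k * d k' * cisMul k' x * ∑ j ∈ range l, cisMul (k - k') (grid x₀ l j) := by
        simp_rw [trigPoly, sum_mul_sum, mul_sum]
        rw [sum_comm]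
        refine sum_congr rfl fun k _ => ?_
        rw [sum_comm]
        refine sum_congr rfl fun k' _ => sum_congr rfl fun j _ => ?_
        rw [cisMul_sub_right, sub_eq_add_neg, ← cisMul_mul_cisMul]
        ring
    _ = ∑ k ∈ s, ∑ k' ∈ t, if k = k' then l * (c k * d k * cisMul k x) else 0 := by
        refine sum_congr rfl fun k hk => sum_congr rfl fun k' hk' => ?_
        rw [sum_cisMul_grid (hl k hk k' hk')]
        rcases eq_or_ne k k' with rfl | hne
        · rw [sub_self, if_pos rfl, if_pos rfl]
          ring
        · rw [if_neg (sub_ne_zero.mpr hne), if_neg hne, mul_zero]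
    _ = l * trigPoly s (c * d) x := by
        simp_rw [sum_ite_eq, trigPoly, mul_sum]
        exact sum_congr rfl fun k hk => by simp [hst hk]

lemma card_filter_sub_eq (N : ℕ) (k : ℤ) :
    #{p ∈ range N ×ˢ range N | (p.1 : ℤ) - p.2 = k} = N - k.natAbs := by
  rw [← card_range (N - k.natAbs)]
  refine card_bij' (fun p _ => min p.1 p.2)
    (fun i _ => (i + if 0 ≤ k then k.natAbs else 0, i + if 0 ≤ k then 0 else k.natAbs))
    ?_ ?_ ?_ ?_
  · intro p hp
    simp only [mem_filter, mem_product, mem_range] at hp ⊢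
    omega
  · intro i hi
    simp only [mem_filter, mem_product, mem_range] at hi ⊢
    split_ifs <;> omega
  · intro p hp
    simp only [mem_filter, mem_product, mem_range] at hp
    ext <;> dsimp only <;> split_ifs <;> omega
  · intro i _
    split_ifs <;> simp

/-- `N` times the classical Fejér kernel. -/
def fejerKernel (N : ℕ) (t : ℝ) : ℝ := normSq (∑ j ∈ range N, cisMul j t)

lemma fejerKernel_nonneg (N : ℕ) (t : ℝ) : 0 ≤ fejerKernel N t := normSq_nonneg _

lemma ofReal_fejerKernel {N M : ℕ} (hNM : N ≤ M) (t : ℝ) :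
    (fejerKernel N t : ℂ) =
      trigPoly (Icc (1 - M) (M - 1)) (fun k => ((N - k.natAbs : ℕ) : ℂ)) t := by
  have hmaps : ∀ p ∈ range N ×ˢ range N, (p.1 : ℤ) - p.2 ∈ Icc (1 - (M : ℤ)) (M - 1) := by
    intro p hp
    simp only [mem_product, mem_range] at hp
    simp only [mem_Icc]
    omega
  rw [fejerKernel, ← mul_conj, map_sum, sum_mul_sum, ← sum_product',
    ← sum_fiberwise_of_maps_to hmaps, trigPoly]
  refine sum_congr rfl fun k _ => ?_
  rw [sum_congr rfl fun p hp => ?_, sum_const, card_filter_sub_eq, nsmul_eq_mul]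
  rw [(mem_filter.mp hp).2.symm, conj_cisMul, cisMul_mul_cisMul, sub_eq_add_neg]

lemma sum_fejerKernel_grid {N l : ℕ} (hNl : N ≤ l) (x₀ x : ℝ) :
    ∑ j ∈ range l, fejerKernel N (x - grid x₀ l j) = N * l := by
  rcases Nat.eq_zero_or_pos N with rfl | hN
  · simp [fejerKernel]
  have h : ∑ j ∈ range l, (fejerKernel N (x - grid x₀ l j) : ℂ) = l * N := by
    simpa [trigPoly, ofReal_fejerKernel le_rfl] using
      sum_grid_trigPoly_mul_trigPoly (s := {0}) (t := Icc (1 - N) (N - 1)) (l := l)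
        (by rw [singleton_subset_iff, mem_Icc]; omega)
        (fun k hk k' hk' => by rw [mem_singleton.mp hk, abs_lt]; rw [mem_Icc] at hk'; omega)
        1 (fun k => ((N - k.natAbs : ℕ) : ℂ)) x₀ x
  rw [mul_comm]
  exact_mod_cast h

lemma trigPoly_sub (s : Finset ℤ) (c d : ℤ → ℂ) (t : ℝ) :
    trigPoly s c t - trigPoly s d t = trigPoly s (c - d) t := by
  simp only [trigPoly, ← sum_sub_distrib, Pi.sub_apply, sub_mul]

lemma sum_grid_mul_fejerKernel_sub {n m l : ℕ} (hnm : n < m) (hml : n + m ≤ l) (c : ℤ → ℂ)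
    (x₀ x : ℝ) :
    ∑ j ∈ range l, trigPoly (Icc (-n) n) c (grid x₀ l j) *
        ((fejerKernel m (x - grid x₀ l j) - fejerKernel n (x - grid x₀ l j) : ℝ) : ℂ) =
      l * ((m - n) * trigPoly (Icc (-n) n) c x) := by
  simp only [ofReal_sub, ofReal_fejerKernel (le_refl m), ofReal_fejerKernel hnm.le, trigPoly_sub]
  rw [sum_grid_trigPoly_mul_trigPoly _ _ c, trigPoly, trigPoly]
  · congr 1
    rw [mul_sum]
    refine sum_congr rfl fun k hk => ?_
    rw [mem_Icc] at hk
    rw [Pi.mul_apply, Pi.sub_apply, Nat.cast_sub (by omega), Nat.cast_sub (by omega)]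
    ring
  · intro k hk
    simp only [mem_Icc] at hk ⊢
    omega
  · intro k hk k' hk'
    simp only [mem_Icc] at hk hk'
    rw [abs_lt]
    omega

lemma sub_mul_norm_trigPoly_le {n m l : ℕ} (hnm : n < m) (hml : n + m ≤ l) {c : ℤ → ℂ}
    {x₀ B : ℝ} (hB : ∀ j < l, ‖trigPoly (Icc (-n) n) c (grid x₀ l j)‖ ≤ B) (x : ℝ) :
    (m - n) * ‖trigPoly (Icc (-n) n) c x‖ ≤ (m + n) * B := by
  set P := trigPoly (Icc (-n) n) c
  set F : ℕ → ℕ → ℝ := fun N j => fejerKernel N (x - grid x₀ l j)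
  have hl : (0 : ℝ) < l := by exact_mod_cast (by omega : 0 < l)
  have hmn : (n : ℝ) ≤ m := by exact_mod_cast hnm.le
  have hF : ∀ j, |F m j - F n j| ≤ F m j + F n j := fun j =>
    (abs_sub _ _).trans_eq (by
      rw [abs_of_nonneg (fejerKernel_nonneg _ _), abs_of_nonneg (fejerKernel_nonneg _ _)])
  refine le_of_mul_le_mul_left ?_ hl
  calc (l : ℝ) * ((m - n) * ‖P x‖)
      = ‖∑ j ∈ range l, P (grid x₀ l j) * ((F m j - F n j : ℝ) : ℂ)‖ := by
        rw [sum_grid_mul_fejerKernel_sub hnm hml, norm_mul, norm_mul, Complex.norm_natCast,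
          ← ofReal_natCast, ← ofReal_natCast, ← ofReal_sub, norm_real,
          Real.norm_of_nonneg (by linarith)]
    _ ≤ ∑ j ∈ range l, B * (F m j + F n j) := by
        refine norm_sum_le_of_le _ fun j hj => ?_
        rw [norm_mul, norm_real, Real.norm_eq_abs]
        have hBj := hB j (mem_range.mp hj)
        exact mul_le_mul hBj (hF j) (abs_nonneg _) ((norm_nonneg _).trans hBj)
    _ = l * ((m + n) * B) := by
        rw [← mul_sum, sum_add_distrib, sum_fejerKernel_grid (by omega : m ≤ l),
          sum_fejerKernel_grid (by omega : n ≤ l)]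
        ring

/-- The exponential coefficients of `a 0 / 2 + ∑ (a k cos kt + b k sin kt)`; at `k = 0` the
factor `Int.sign 0 = 0` leaves `a 0 / 2`. -/
def trigCoeff (a b : ℕ → ℝ) (k : ℤ) : ℂ := (a k.natAbs - k.sign * b k.natAbs * I) / 2

lemma trigCoeff_mul_cisMul_add_neg (a b : ℕ → ℝ) {k : ℕ} (hk : 0 < k) (t : ℝ) :
    trigCoeff a b k * cisMul k t + trigCoeff a b (-k) * cisMul (-k) t =
      ((a k * Real.cos (k * t) + b k * Real.sin (k * t) : ℝ) : ℂ) := by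
  have hsign : (k : ℤ).sign = 1 := Int.sign_eq_one_of_pos (by omega)
  simp only [trigCoeff, cisMul, Int.natAbs_neg, Int.natAbs_natCast, Int.sign_neg, hsign]
  rw [show ((-(k : ℤ) : ℤ) : ℂ) * t * I = -((k : ℂ) * t) * I by push_cast; ring,
    Int.cast_natCast, exp_mul_I, exp_mul_I, Complex.cos_neg, Complex.sin_neg]
  push_cast
  linear_combination -(b k * Complex.sin (k * t)) * I_sq

lemma ofReal_trigSum_eq_trigPoly (n : ℕ) (a b : ℕ → ℝ) (t : ℝ) :
    ((a 0 / 2 + ∑ k ∈ Icc 1 n, (a k * Real.cos (k * t) + b k * Real.sin (k * t)) : ℝ) : ℂ) =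
      trigPoly (Icc (-n) n) (trigCoeff a b) t := by
  induction n with
  | zero => simp [trigPoly, trigCoeff]
  | succ n ih =>
    rw [sum_Icc_succ_top (by omega), ← add_assoc, ofReal_add, ih,
      ← trigCoeff_mul_cisMul_add_neg a b n.succ_pos, trigPoly, trigPoly, Nat.cast_succ (R := ℤ),
      sum_Icc_succ_eq_add_endpoints]
    ring

lemma le_one_add_inv_mul_of_sub_mul_le {δ n l y M : ℝ} (hδ : 0 < δ) (hl : 2 * (1 + δ) * n ≤ l)
    (hnl : 2 * n < l) (hM : 0 ≤ M) (h : (l - 2 * n) * y ≤ l * M) : y ≤ (1 + δ⁻¹) * M := by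
  have hl' : l ≤ (1 + δ⁻¹) * (l - 2 * n) := by
    have h2n : 2 * n ≤ (l - 2 * n) / δ := by
      rw [le_div_iff₀ hδ]
      linarith
    linear_combination h2n
  refine le_of_mul_le_mul_left ?_ (sub_pos.mpr hnl)
  calc (l - 2 * n) * y ≤ l * M := h
    _ ≤ (1 + δ⁻¹) * (l - 2 * n) * M := mul_le_mul_of_nonneg_right hl' hM
    _ = (l - 2 * n) * ((1 + δ⁻¹) * M) := by ring

/-- **Bernstein-type grid bound for trigonometric polynomials** (Zygmund).
Let `S(x) = a₀/2 + Σ_{k=1}^n (a_k cos kx + b_k sin kx)` be a trigonometric polynomial of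
order `n`.  For any `x* ∈ ℝ`, `δ > 0` and integer `l ≥ 2(1+δ)n`, with grid points
`x_j = x* + 2πj/l`, `0 ≤ j ≤ l`, we have
`max_x |S(x)| ≤ (1 + δ⁻¹) max_{0 ≤ j ≤ l} |S(x_j)|`. -/
theorem statement_4
    (n : ℕ) (a b : ℕ → ℝ) (S : ℝ → ℝ)
    (hS : ∀ x : ℝ, S x =
      a 0 / 2 + ∑ k ∈ Finset.Icc 1 n, (a k * Real.cos (k * x) + b k * Real.sin (k * x)))
    (xstar : ℝ) (δ : ℝ) (hδ : 0 < δ)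
    (l : ℕ) (hl : 2 * (1 + δ) * n ≤ l)
    (x : ℝ) :
    |S x| ≤ (1 + δ⁻¹) * (⨆ j : Fin (l + 1), |S (xstar + 2 * π * (j : ℕ) / l)|) := by
  set M := ⨆ j : Fin (l + 1), |S (xstar + 2 * π * (j : ℕ) / l)|
  have hM : ∀ j ≤ l, |S (grid xstar l j)| ≤ M := fun j hj =>
    le_ciSup (f := fun j : Fin (l + 1) => |S (xstar + 2 * π * (j : ℕ) / l)|)
      (Set.finite_range _).bddAbove ⟨j, by omega⟩
  have hM0 : 0 ≤ M := (abs_nonneg _).trans (hM 0 l.zero_le)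
  rcases lt_or_ge (2 * n) l with hnl | hln
  · have hSc : ∀ t, (S t : ℂ) = trigPoly (Icc (-n) n) (trigCoeff a b) t := fun t => by
      rw [hS, ofReal_trigSum_eq_trigPoly]
    have key := sub_mul_norm_trigPoly_le (n := n) (m := l - n) (l := l) (by omega) (by omega)
      (B := M) (fun j hj => by rw [← hSc, norm_real, Real.norm_eq_abs]; exact hM j hj.le) x
    rw [← hSc, norm_real, Real.norm_eq_abs, Nat.cast_sub (by omega)] at key
    refine le_one_add_inv_mul_of_sub_mul_le hδ hl (by exact_mod_cast hnl) hM0 ?_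
    linear_combination key
  · have hn : n = 0 := by
      by_contra hn
      have hn' : (0 : ℝ) < n := by exact_mod_cast Nat.pos_of_ne_zero hn
      have hln' : (l : ℝ) ≤ 2 * n := by exact_mod_cast hln
      nlinarith
    have hconst : ∀ t, S t = a 0 / 2 := fun t => by simp [hS, hn]
    calc |S x| = |S (grid xstar l 0)| := by rw [hconst, hconst]
      _ ≤ M := hM 0 l.zero_le
      _ ≤ (1 + δ⁻¹) * M := le_mul_of_one_le_left hM0 (by simp [hδ.le])
end
end

section
/- Let (X_t) be a stationary process with mean zero, autocovariances γ_k = E[X_0 X_k], and Σ_T = (γ_{s-t})_{1≤s,t≤T}. Let K be a symmetric kernel with K(0)=1, |K(x)| ≤ 1, and K(x)=0 for |x|>1, let 1 ≤ B_T < T, and let Σ̂_{T,B_T} = [K((s-t)/B_T) γ̂_{s-t}]_{1≤s,t≤T}, where γ̂_k = T^{-1} Σ_{t=|k|+1}^T X_{t-|k|} X_t. Then the bias satisfies λ(E Σ̂_{T,B_T} − Σ_T) ≤ b_T, where b_T = 2 Σ_{k=1}^{B_T} [1 − K(k/B_T)] |γ_k| + (2/T) Σ_{k=1}^{B_T} k|γ_k|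 + 2 Σ_{k=B_T+1}^{T-1} |γ_k|. -/
open MeasureTheory ProbabilityTheory Filter Finset Real Topology

noncomputable section

namespace TS

variable {Ω : Type*} [MeasurableSpace Ω]

/-- The causal process `X_t = g(ε_t, ε_{t-1}, …)`. -/
def X (g : (ℕ → ℝ) → ℝ) (ε : ℤ → Ω → ℝ) (t : ℤ) (ω : Ω) : ℝ :=
  g fun k => ε (t - k) ω

/-- The coupled process `X'_t = g(ε_t, …, ε_1, ε'_0, ε_{-1}, …)`, where `ε 0` has been
replaced by the independent copy `ε'`. -/
def X' (g : (ℕ → ℝ) → ℝ) (ε : ℤ → Ω → ℝ) (ε' : Ω → ℝ) (t : ℤ) (ω : Ω) : ℝ :=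
  g fun k => if t - (k : ℤ) = 0 then ε' ω else ε (t - k) ω

/-- `ε t` (t ∈ ℤ) together with the extra copy `ε'` form an i.i.d. family. -/
def IID (μ : Measure Ω) (ε : ℤ → Ω → ℝ) (ε' : Ω → ℝ) : Prop :=
  (∀ t, Measurable (ε t)) ∧ Measurable ε' ∧
    iIndepFun
      (fun i : Option ℤ => i.elim ε' ε) μ ∧
    ∀ t : ℤ, Measure.map (ε t) μ = Measure.map ε' μ

/-- Physical dependence measure `δ_q(t) = ‖X_t − X'_t‖_q`. -/
def delta (μ : Measure Ω) (g : (ℕ → ℝ) → ℝ) (ε : ℤ → Ω → ℝ) (ε' : Ω → ℝ)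
    (q : ℝ) (t : ℕ) : ℝ :=
  (eLpNorm (fun ω => X g ε t ω - X' g ε ε' t ω) (ENNReal.ofReal q) μ).toReal

/-- Tail sum `Θ_q(m) = Σ_{t≥m} δ_q(t)` of the physical dependence measures. -/
def Theta (μ : Measure Ω) (g : (ℕ → ℝ) → ℝ) (ε : ℤ → Ω → ℝ) (ε' : Ω → ℝ)
    (q : ℝ) (m : ℕ) : ℝ :=
  ∑' t : ℕ, delta μ g ε ε' q (m + t)

/-- Sample autocovariance `γ̂_k = T⁻¹ Σ_{t=|k|+1}^T Y_{t-|k|} Y_t`. -/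
def hgamma (Y : ℤ → Ω → ℝ) (T : ℕ) (k : ℤ) (ω : Ω) : ℝ :=
  (T : ℝ)⁻¹ * ∑ t ∈ Finset.Icc (k.natAbs + 1) T, Y ((t : ℤ) - (k.natAbs : ℤ)) ω * Y (t : ℤ) ω

/-- Autocovariance `γ_k = E[Y_0 Y_k]`. -/
def gamma (μ : Measure Ω) (Y : ℤ → Ω → ℝ) (k : ℤ) : ℝ := ∫ ω, Y 0 ω * Y k ω ∂μ

/-- Operator norm (spectral radius) `λ(A) = max_{|x|=1} |A x|` of a real matrix. -/
def opNorm {T : ℕ} (A : Matrix (Fin T) (Fin T) ℝ) : ℝ :=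
  sSup {r : ℝ | ∃ x : Fin T → ℝ, ∑ i, x i ^ 2 = 1 ∧
    r = Real.sqrt (∑ i, (A.mulVec x i) ^ 2)}

/-- The autocovariance matrix `Σ_T = (γ_{s-t})_{1≤s,t≤T}`. -/
def covM (μ : Measure Ω) (Y : ℤ → Ω → ℝ) (T : ℕ) : Matrix (Fin T) (Fin T) ℝ :=
  Matrix.of fun s t => gamma μ Y ((s : ℤ) - (t : ℤ))

/-- The sample autocovariance matrix `Σ̂_T = (γ̂_{s-t})_{1≤s,t≤T}`. -/
def scovM (Y : ℤ → Ω → ℝ) (T : ℕ) (ω : Ω) : Matrix (Fin T) (Fin T) ℝ :=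
  Matrix.of fun s t => hgamma Y T ((s : ℤ) - (t : ℤ)) ω

end TS

/-!
By stationarity `E γ̂_k = (1 - |k|/T) γ_k`, so the bias `E Σ̂_{T,B} - Σ_T` is the Toeplitz matrix
with entry `(K(k/B)(1 - k/T) - 1) γ_k` at lag `k = |s - t|`. The operator norm is at most the
largest absolute row and column sum (Schur test), and in a Toeplitz matrix each row meets every
lag at most twice. Finally `|K(k/B)(1 - k/T) - 1| ≤ (1 - K(k/B)) + k/T` for `k ≤ B`, while the
coefficient is `-1` for `k > B` since `K` vanishes outside `[-1, 1]`.
-/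

theorem abs_mul_one_sub_sub_one_le {a q : ℝ} (ha : |a| ≤ 1) (hq : 0 ≤ q) :
    |a * (1 - q) - 1| ≤ (1 - a) + q := by
  rw [abs_le] at ha ⊢
  constructor <;> nlinarith

theorem Function.Even.apply_natAbs_div {K : ℝ → ℝ} (hK : Function.Even K) (k : ℤ) (B : ℝ) :
    K (k.natAbs / B) = K (k / B) := by
  rw [Nat.cast_natAbs, Int.cast_abs]
  rcases abs_choice (k : ℝ) with h | h <;> rw [h]
  rw [neg_div, hK]

theorem Finset.sum_comp_le_sum_of_injOn {ι κ : Type*} {s : Finset ι} {t : Finset κ} (e : ι → κ)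
    (he : Set.InjOn e s) (hst : Set.MapsTo e s t) {f : κ → ℝ} (hf : ∀ k ∈ t, 0 ≤ f k) :
    ∑ i ∈ s, f (e i) ≤ ∑ k ∈ t, f k := by
  classical
  rw [← sum_image he]
  exact sum_le_sum_of_subset_of_nonneg (image_subset_iff.2 hst) fun k hk _ => hf k hk

theorem Fin.sum_comp_natAbs_sub_le {T : ℕ} (c : ℕ → ℝ) (hc : ∀ m, 0 ≤ c m) (i : Fin T) :
    ∑ j : Fin T, c ((i : ℤ) - j).natAbs ≤ 2 * ∑ m ∈ range T, c m := by
  rw [← sum_filter_add_sum_filter_not univ (fun j : Fin T => j < i), two_mul]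
  have hinj_le : ∀ s : Finset (Fin T), Set.InjOn (fun j : Fin T => ((i : ℤ) - j).natAbs) s →
      ∑ j ∈ s, c ((i : ℤ) - j).natAbs ≤ ∑ m ∈ range T, c m := fun s hs =>
    sum_comp_le_sum_of_injOn _ hs (fun j _ => by simp only [coe_range, Set.mem_Iio]; omega)
      fun m _ => hc m
  gcongr <;> refine hinj_le _ fun j hj k hk hjk => Fin.ext ?_ <;> dsimp only at hjk <;>
    simp only [coe_filter, mem_univ, true_and, Set.mem_ofPred_eq, not_lt] at hj hk <;> omega

namespace TS

theorem abs_mulVec_apply_sq_le {T : ℕ} (A : Matrix (Fin T) (Fin T) ℝ) (x : Fin T → ℝ)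
    (i : Fin T) : (A.mulVec x i) ^ 2 ≤ (∑ j, |A i j|) * ∑ j, |A i j| * x j ^ 2 := by
  have htri : |A.mulVec x i| ≤ ∑ j, |A i j| * |x j| := by
    simpa only [Matrix.mulVec, dotProduct, abs_mul] using
      Finset.abs_sum_le_sum_abs (fun j => A i j * x j) univ
  calc (A.mulVec x i) ^ 2 ≤ (∑ j, |A i j| * |x j|) ^ 2 := by
        rw [← sq_abs]; exact pow_le_pow_left₀ (abs_nonneg _) htri 2
    _ ≤ (∑ j, |A i j|) * ∑ j, |A i j| * x j ^ 2 :=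
        sum_sq_le_sum_mul_sum_of_sq_le_mul _ (fun j _ => abs_nonneg _)
          (fun j _ => by positivity) fun j _ => le_of_eq (by rw [mul_pow, sq_abs (x j)]; ring)

theorem opNorm_le_of_sum_abs_le {T : ℕ} (A : Matrix (Fin T) (Fin T) ℝ) {R : ℝ} (hR : 0 ≤ R)
    (hrow : ∀ i, ∑ j, |A i j| ≤ R) (hcol : ∀ j, ∑ i, |A i j| ≤ R) : opNorm A ≤ R := by
  refine Real.sSup_le ?_ hR
  rintro r ⟨x, hx, rfl⟩
  have hsq : ∑ i, (A.mulVec x i) ^ 2 ≤ R ^ 2 := calc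
    _ ≤ ∑ i, R * ∑ j, |A i j| * x j ^ 2 := sum_le_sum fun i _ =>
        (abs_mulVec_apply_sq_le A x i).trans (by gcongr; exact hrow i)
    _ = R * ∑ j, (∑ i, |A i j|) * x j ^ 2 := by
        rw [← mul_sum, sum_comm]; simp_rw [sum_mul]
    _ ≤ R * ∑ j, R * x j ^ 2 := by gcongr with j; exact hcol j
    _ = R ^ 2 := by rw [← mul_sum, hx]; ring
  exact (Real.sqrt_le_sqrt hsq).trans_eq (Real.sqrt_sq hR)

theorem opNorm_le_of_abs_apply_eq {T : ℕ} (A : Matrix (Fin T) (Fin T) ℝ) (c : ℕ → ℝ)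
    (hc : ∀ m, 0 ≤ c m) (hA : ∀ i j, |A i j| = c ((i : ℤ) - j).natAbs) :
    opNorm A ≤ 2 * ∑ m ∈ range T, c m := by
  have hrow : ∀ i, ∑ j, |A i j| ≤ 2 * ∑ m ∈ range T, c m := fun i => by
    simpa only [hA] using Fin.sum_comp_natAbs_sub_le c hc i
  have hR : 0 ≤ 2 * ∑ m ∈ range T, c m := mul_nonneg zero_le_two (sum_nonneg fun m _ => hc m)
  refine opNorm_le_of_sum_abs_le A hR hrow fun j => ?_
  calc ∑ i, |A i j| = ∑ i, |A j i| := sum_congr rfl fun i _ => by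
        rw [hA, hA, ← Int.natAbs_neg, neg_sub]
    _ ≤ _ := hrow j

variable {Ω : Type*} [MeasurableSpace Ω] {μ : Measure Ω} {Y : ℤ → Ω → ℝ}

def IsStationary (μ : Measure Ω) (Y : ℤ → Ω → ℝ) : Prop :=
  ∀ t : ℤ, Measure.map (fun ω i => Y (t + i) ω) μ = Measure.map (fun ω i => Y i ω) μ

theorem IsStationary.integral_mul (hY : IsStationary μ Y) (hmeas : ∀ t, Measurable (Y t))
    (a b : ℤ) : ∫ ω, Y a ω * Y b ω ∂μ = gamma μ Y (b - a) := by
  have hshift : ∀ t, ∫ ω, Y t ω * Y (t + (b - a)) ω ∂μ =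
      ∫ u : ℤ → ℝ, u 0 * u (b - a) ∂(Measure.map (fun ω i => Y i ω) μ) := fun t => by
    rw [← hY t, integral_map (measurable_pi_lambda _ fun i => hmeas (t + i)).aemeasurable
      (by fun_prop : Measurable fun u : ℤ → ℝ => u 0 * u (b - a)).aestronglyMeasurable]
    simp only [add_zero]
  calc ∫ ω, Y a ω * Y b ω ∂μ = ∫ ω, Y a ω * Y (a + (b - a)) ω ∂μ := by rw [add_sub_cancel]
    _ = ∫ ω, Y 0 ω * Y (0 + (b - a)) ω ∂μ := (hshift a).trans (hshift 0).symm
    _ = gamma μ Y (b - a) := by rw [zero_add, gamma]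

theorem IsStationary.gamma_neg (hY : IsStationary μ Y) (hmeas : ∀ t, Measurable (Y t))
    (k : ℤ) : gamma μ Y (-k) = gamma μ Y k := by
  rw [← zero_sub, ← hY.integral_mul hmeas, gamma]
  simp only [mul_comm]

theorem IsStationary.gamma_natAbs (hY : IsStationary μ Y) (hmeas : ∀ t, Measurable (Y t))
    (k : ℤ) : gamma μ Y k.natAbs = gamma μ Y k := by
  obtain ⟨n, rfl | rfl⟩ := Int.eq_nat_or_neg k
  · rfl
  · rw [Int.natAbs_neg, Int.natAbs_natCast, hY.gamma_neg hmeas]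

theorem IsStationary.integral_hgamma (hY : IsStationary μ Y) (hmeas : ∀ t, Measurable (Y t))
    (hint : ∀ s t, Integrable (fun ω => Y s ω * Y t ω) μ) (T : ℕ) (k : ℤ) :
    ∫ ω, hgamma Y T k ω ∂μ = ((T - k.natAbs : ℕ) : ℝ) / T * gamma μ Y k := by
  have hterm : ∀ t ∈ Icc (k.natAbs + 1) T,
      ∫ ω, Y ((t : ℤ) - k.natAbs) ω * Y t ω ∂μ = gamma μ Y k := fun t _ => by
    rw [hY.integral_mul hmeas, sub_sub_cancel, hY.gamma_natAbs hmeas]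
  simp only [hgamma]
  rw [integral_const_mul, integral_finsetSum _ fun t _ => hint _ _, sum_congr rfl hterm,
    sum_const, Nat.card_Icc, nsmul_eq_mul, Nat.add_sub_add_right]
  ring

/-- `E Σ̂_{T,B}`, the expected tapered sample autocovariance matrix. -/
def meanTaperedScovM (μ : Measure Ω) (Y : ℤ → Ω → ℝ) (K : ℝ → ℝ) (B T : ℕ) :
    Matrix (Fin T) (Fin T) ℝ :=
  Matrix.of fun s t : Fin T =>
    ∫ ω, K ((((s : ℤ) - (t : ℤ) : ℤ) : ℝ) / B) * hgamma Y T ((s : ℤ) - (t : ℤ)) ω ∂μ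

def taperBiasCoeff (K : ℝ → ℝ) (B T m : ℕ) : ℝ := K (m / B) * ((T - m) / T) - 1

theorem IsStationary.meanTaperedScovM_sub_covM_apply (hY : IsStationary μ Y)
    (hmeas : ∀ t, Measurable (Y t)) (hint : ∀ s t, Integrable (fun ω => Y s ω * Y t ω) μ)
    {K : ℝ → ℝ} (hK : Function.Even K) (B : ℕ) {T : ℕ} (i j : Fin T) :
    (meanTaperedScovM μ Y K B T - covM μ Y T) i j =
      taperBiasCoeff K B T ((i : ℤ) - j).natAbs * gamma μ Y ((i : ℤ) - j).natAbs := by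
  have hm : ((i : ℤ) - j).natAbs ≤ T := by omega
  simp only [Matrix.sub_apply, meanTaperedScovM, covM, Matrix.of_apply]
  rw [integral_const_mul, hY.integral_hgamma hmeas hint, ← hK.apply_natAbs_div,
    hY.gamma_natAbs hmeas, taperBiasCoeff, Nat.cast_sub hm]
  ring

section TaperBiasCoeff

variable {K : ℝ → ℝ} {B T m : ℕ}

theorem taperBiasCoeff_zero (hK0 : K 0 = 1) (hT : T ≠ 0) : taperBiasCoeff K B T 0 = 0 := by
  simp [taperBiasCoeff, hK0, hT]

theorem taperBiasCoeff_of_lt (hKs : ∀ x, 1 < |x| → K x = 0) (hB : 0 < B) (hm : B < m) :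
    taperBiasCoeff K B T m = -1 := by
  have hB' : (0 : ℝ) < B := by exact_mod_cast hB
  rw [taperBiasCoeff, hKs, zero_mul, zero_sub]
  rw [abs_of_nonneg (by positivity), one_lt_div hB']
  exact_mod_cast hm

theorem abs_taperBiasCoeff_le (hKb : ∀ x, |K x| ≤ 1) (hT : T ≠ 0) :
    |taperBiasCoeff K B T m| ≤ (1 - K (m / B)) + m / T := by
  rw [taperBiasCoeff, sub_div, div_self (by exact_mod_cast hT)]
  exact abs_mul_one_sub_sub_one_le (hKb _) (by positivity)

theorem two_mul_sum_abs_taperBiasCoeff_mul_le (hK0 : K 0 = 1) (hKb : ∀ x, |K x| ≤ 1)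
    (hKs : ∀ x, 1 < |x| → K x = 0) (hB : 0 < B) (hBT : B < T) (g : ℕ → ℝ) :
    2 * ∑ m ∈ range T, |taperBiasCoeff K B T m| * |g m| ≤
      2 * ∑ k ∈ Icc 1 B, (1 - K (k / B)) * |g k| + (2 / T) * ∑ k ∈ Icc 1 B, (k : ℝ) * |g k| +
        2 * ∑ k ∈ Icc (B + 1) (T - 1), |g k| := by
  have hT : T ≠ 0 := by omega
  have hsplit : ∑ m ∈ range T, |taperBiasCoeff K B T m| * |g m| =
      ∑ k ∈ Icc 1 B, |taperBiasCoeff K B T k| * |g k| +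
        ∑ k ∈ Icc (B + 1) (T - 1), |taperBiasCoeff K B T k| * |g k| := by
    rw [range_eq_Ico, ← sum_Ico_consecutive _ (Nat.zero_le (B + 1)) hBT,
      sum_eq_sum_Ico_succ_bot (by omega : 0 < B + 1), taperBiasCoeff_zero hK0 hT, abs_zero,
      zero_mul, zero_add, zero_add, Ico_add_one_right_eq_Icc,
      show Ico (B + 1) T = Icc (B + 1) (T - 1) by ext; simp; omega]
  have hlow : ∑ k ∈ Icc 1 B, |taperBiasCoeff K B T k| * |g k| ≤
      ∑ k ∈ Icc 1 B, (1 - K (k / B)) * |g k| + ∑ k ∈ Icc 1 B, (k : ℝ) / T * |g k| := by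
    rw [← sum_add_distrib]
    gcongr with k
    rw [← add_mul]
    gcongr
    exact abs_taperBiasCoeff_le hKb hT
  have hhigh : ∑ k ∈ Icc (B + 1) (T - 1), |taperBiasCoeff K B T k| * |g k| =
      ∑ k ∈ Icc (B + 1) (T - 1), |g k| := sum_congr rfl fun k hk => by
    rw [taperBiasCoeff_of_lt hKs hB (by simp at hk; omega), abs_neg, abs_one, one_mul]
  have hscale : (2 / T) * ∑ k ∈ Icc 1 B, (k : ℝ) * |g k| =
      2 * ∑ k ∈ Icc 1 B, (k : ℝ) / T * |g k| := by
    rw [mul_sum, mul_sum]; exact sum_congr rfl fun k _ => by ring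
  linarith

end TaperBiasCoeff

end TS

theorem statement_5_general
    {Ω : Type*} [MeasurableSpace Ω] (μ : Measure Ω)
    (Xp : ℤ → Ω → ℝ) (hmeas : ∀ t, Measurable (Xp t))
    (hstat : ∀ t : ℤ,
      Measure.map (fun ω => fun i : ℤ => Xp (t + i) ω) μ =
        Measure.map (fun ω => fun i : ℤ => Xp i ω) μ)
    (hint : ∀ s t : ℤ, Integrable (fun ω => Xp s ω * Xp t ω) μ)
    (K : ℝ → ℝ) (hKsym : ∀ x : ℝ, K (-x) = K x) (hK0 : K 0 = 1)
    (hKb : ∀ x : ℝ, |K x| ≤ 1) (hKs : ∀ x : ℝ, 1 < |x| → K x = 0)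
    (T B : ℕ) (hB1 : 1 ≤ B) (hBT : B < T)
    (bT : ℝ)
    (hbT : bT =
      2 * ∑ k ∈ Finset.Icc 1 B, (1 - K ((k : ℝ) / B)) * |TS.gamma μ Xp k| +
      (2 / T) * ∑ k ∈ Finset.Icc 1 B, (k : ℝ) * |TS.gamma μ Xp k| +
      2 * ∑ k ∈ Finset.Icc (B + 1) (T - 1), |TS.gamma μ Xp k|) :
    TS.opNorm
      ((Matrix.of fun s t : Fin T =>
          ∫ ω, K ((((s : ℤ) - (t : ℤ) : ℤ) : ℝ) / B) *
            TS.hgamma Xp T ((s : ℤ) - (t : ℤ)) ω ∂μ)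
        - TS.covM μ Xp T) ≤ bT := by
  have hbias := TS.two_mul_sum_abs_taperBiasCoeff_mul_le hK0 hKb hKs hB1 hBT
    fun m => TS.gamma μ Xp m
  calc TS.opNorm (TS.meanTaperedScovM μ Xp K B T - TS.covM μ Xp T)
      ≤ 2 * ∑ m ∈ range T, |TS.taperBiasCoeff K B T m| * |TS.gamma μ Xp m| :=
        TS.opNorm_le_of_abs_apply_eq _ _ (fun m => by positivity) fun i j => by
          rw [TS.IsStationary.meanTaperedScovM_sub_covM_apply hstat hmeas hint hKsym, abs_mul]
    _ ≤ bT := hbT ▸ hbias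

/-- **Bias bound for the tapered covariance matrix estimate.**
For a mean-zero (strictly) stationary process `(X_t)` with autocovariances `γ_k`,
a symmetric kernel `K` with `K(0) = 1`, `|K| ≤ 1`, `K = 0` outside `[-1,1]`, and a
bandwidth `1 ≤ B < T`, the expectation of the tapered estimate
`Σ̂_{T,B} = (K((s-t)/B) γ̂_{s-t})` satisfies `λ(E Σ̂_{T,B} − Σ_T) ≤ b_T`, where
`b_T = 2 Σ_{k=1}^{B}(1−K(k/B))|γ_k| + (2/T) Σ_{k=1}^{B} k|γ_k| + 2 Σ_{k=B+1}^{T-1}|γ_k|`. -/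
theorem statement_5
    {Ω : Type*} [MeasurableSpace Ω] (μ : Measure Ω) [IsProbabilityMeasure μ]
    (Xp : ℤ → Ω → ℝ) (hmeas : ∀ t, Measurable (Xp t))
    (hstat : ∀ t : ℤ,
      Measure.map (fun ω => fun i : ℤ => Xp (t + i) ω) μ =
        Measure.map (fun ω => fun i : ℤ => Xp i ω) μ)
    (hmean : ∀ t : ℤ, ∫ ω, Xp t ω ∂μ = 0)
    (hint : ∀ s t : ℤ, Integrable (fun ω => Xp s ω * Xp t ω) μ)
    (K : ℝ → ℝ) (hKsym : ∀ x : ℝ, K (-x) = K x) (hK0 : K 0 = 1)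
    (hKb : ∀ x : ℝ, |K x| ≤ 1) (hKs : ∀ x : ℝ, 1 < |x| → K x = 0)
    (T B : ℕ) (hB1 : 1 ≤ B) (hBT : B < T)
    (bT : ℝ)
    (hbT : bT =
      2 * ∑ k ∈ Finset.Icc 1 B, (1 - K ((k : ℝ) / B)) * |TS.gamma μ Xp k| +
      (2 / T) * ∑ k ∈ Finset.Icc 1 B, (k : ℝ) * |TS.gamma μ Xp k| +
      2 * ∑ k ∈ Finset.Icc (B + 1) (T - 1), |TS.gamma μ Xp k|) :
    TS.opNorm
      ((Matrix.of fun s t : Fin T =>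
          ∫ ω, K ((((s : ℤ) - (t : ℤ) : ℤ) : ℝ) / B) *
            TS.hgamma Xp T ((s : ℤ) - (t : ℤ)) ω ∂μ)
        - TS.covM μ Xp T) ≤ bT :=
  statement_5_general μ Xp hmeas hstat hint K hKsym hK0 hKb hKs T B hB1 hBT bT hbT
end
end
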